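/- Lipschitz bound for the Gaussian-smoothed probability: the function h(x) = P_{δ~N(0,σ²I)}[f(x+δ)=c] satisfies: x ↦ Φ⁻¹(h(x)) is 1/σ-Lipschitz with respect to the ℓ₂ norm, for any measurable f and class c (provided h takes values in (0,1)). -/

import Mathlib

open MeasureTheory ProbabilityTheory

/-- The isotropic Gaussian measure `N(0, σ²I_d)` on `ℝ^d`. -/
noncomputable def gaussVec (d : ℕ) (σ : ℝ) : Measure (Fin d → ℝ) :=
  Measure.pi fun _ : Fin d => gaussianReal 0 (Real.toNNReal (σ ^ 2))

/-- Standard normal CDF `Φ`. -/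
noncomputable def stdNormCDF (t : ℝ) : ℝ := ((gaussianReal 0 1) (Set.Iic t)).toReal

/-- Standard normal quantile function `Φ⁻¹`. -/
noncomputable def probit (p : ℝ) : ℝ := sInf {t : ℝ | p ≤ stdNormCDF t}

section Aux
open Real Set
open scoped ENNReal NNReal

set_option maxHeartbeats 1000000 in
lemma lintegral_pi_fin {n : ℕ} (μ : Measure ℝ) [SigmaFinite μ] (f : Fin n → ℝ → ℝ≥0∞)
    (hf : ∀ i, Measurable (f i)) :
    ∫⁻ x : Fin n → ℝ, ∏ i, f i (x i) ∂(Measure.pi fun _ => μ) = ∏ i, ∫⁻ t, f i t ∂μ := by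
  induction n with
  | zero => simp [Measure.pi_of_empty]
  | succ n ih =>
      have hmp := MeasureTheory.measurePreserving_piFinSuccAbove (fun _ : Fin (n+1) => μ) 0
      have key : ∫⁻ x : Fin (n+1) → ℝ, ∏ i, f i (x i) ∂(Measure.pi fun _ => μ)
          = ∫⁻ z : ℝ × (Fin n → ℝ), (f 0 z.1) * ∏ i : Fin n, f i.succ (z.2 i)
              ∂(μ.prod (Measure.pi fun _ => μ)) := by
        rw [← hmp.lintegral_comp]
        · refine lintegral_congr fun x => ?_
          rw [Fin.prod_univ_succ]
          rfl
        · exact ((hf 0).comp measurable_fst).mul <|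
            Finset.measurable_prod _ fun i _ => (hf i.succ).comp ((measurable_pi_apply i).comp measurable_snd)
      rw [key, lintegral_prod_mul (f := f 0) (g := fun w : Fin n → ℝ => ∏ i, f i.succ (w i))
        ((hf 0).aemeasurable)
        ((Finset.measurable_prod _ fun i _ => (hf i.succ).comp (measurable_pi_apply i)).aemeasurable),
        ih (fun i => f i.succ) (fun i => hf i.succ), Fin.prod_univ_succ]

lemma pi_withDensity_fin {n : ℕ} (μ : Measure ℝ) [SigmaFinite μ] (f : ℝ → ℝ≥0∞)
    (hf : Measurable f) [SigmaFinite (μ.withDensity f)] :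
    (Measure.pi fun _ : Fin n => μ.withDensity f)
      = (Measure.pi fun _ : Fin n => μ).withDensity (fun x => ∏ i, f (x i)) := by
  refine Measure.pi_eq fun s hs => ?_
  rw [withDensity_apply _ (MeasurableSet.univ_pi hs)]
  have : ∫⁻ x in Set.univ.pi s, ∏ i, f (x i) ∂(Measure.pi fun _ : Fin n => μ)
      = ∫⁻ x : Fin n → ℝ, ∏ i, (s i).indicator f (x i) ∂(Measure.pi fun _ : Fin n => μ) := by
    rw [← lintegral_indicator (MeasurableSet.univ_pi hs)]
    refine lintegral_congr fun x => ?_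
    by_cases hx : x ∈ Set.univ.pi s
    · rw [Set.indicator_of_mem hx]
      exact Finset.prod_congr rfl fun i _ => (Set.indicator_of_mem (hx i (Set.mem_univ i)) f).symm
    · rw [Set.indicator_of_notMem hx]
      rw [Set.mem_pi] at hx
      push_neg at hx
      obtain ⟨i, -, hi⟩ := hx
      exact (Finset.prod_eq_zero (Finset.mem_univ i) (by simp [Set.indicator_of_notMem hi])).symm
  rw [this, lintegral_pi_fin μ _ (fun _ => hf.indicator (hs _))]
  refine Finset.prod_congr rfl fun i _ => ?_
  rw [withDensity_apply f (hs i), lintegral_indicator (hs i)]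

set_option maxHeartbeats 1000000 in
lemma gauss_conv_pdf {a b : ℝ≥0} (ha : a ≠ 0) (hb : b ≠ 0) (y : ℝ) :
    ∫ x : ℝ, gaussianPDFReal 0 a x * gaussianPDFReal 0 b (y - x)
      = gaussianPDFReal 0 (a + b) y := by
  have hA : (0:ℝ) < a := lt_of_le_of_ne a.coe_nonneg (by exact_mod_cast (Ne.symm ha))
  have hB : (0:ℝ) < b := lt_of_le_of_ne b.coe_nonneg (by exact_mod_cast (Ne.symm hb))
  set A : ℝ := (a : ℝ) with hA'
  set B : ℝ := (b : ℝ) with hB'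
  set k : ℝ := (A + B) / (2 * A * B) with hk
  have hkpos : 0 < k := by positivity
  set m : ℝ := A * y / (A + B) with hm
  have hAB : (0:ℝ) < A + B := by positivity
  have hpoint : ∀ x : ℝ, gaussianPDFReal 0 a x * gaussianPDFReal 0 b (y - x)
      = gaussianPDFReal 0 (a + b) y * ((√(π / k))⁻¹ * rexp (-k * (x - m) ^ 2)) := by
    intro x
    simp only [gaussianPDFReal, sub_zero, NNReal.coe_add]
    have hexp : -x ^ 2 / (2 * A) + -(y - x) ^ 2 / (2 * B)
        = -y ^ 2 / (2 * (A + B)) + -k * (x - m) ^ 2 := by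
      rw [hk, hm]
      have h1 : A ≠ 0 := hA.ne'
      have h2 : B ≠ 0 := hB.ne'
      have h3 : A + B ≠ 0 := hAB.ne'
      field_simp
      ring
    have hconst : (√(2 * π * A))⁻¹ * (√(2 * π * B))⁻¹
        = (√(2 * π * (A + B)))⁻¹ * (√(π / k))⁻¹ := by
      rw [← mul_inv, ← mul_inv, ← Real.sqrt_mul (by positivity), ← Real.sqrt_mul (by positivity)]
      congr 1
      congr 1
      rw [hk]
      have h1 : A ≠ 0 := hA.ne'
      have h2 : B ≠ 0 := hB.ne'
      have h3 : A + B ≠ 0 := hAB.ne'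
      field_simp
    calc (√(2 * π * A))⁻¹ * rexp (-x ^ 2 / (2 * A)) * ((√(2 * π * B))⁻¹ * rexp (-(y - x) ^ 2 / (2 * B)))
        = ((√(2 * π * A))⁻¹ * (√(2 * π * B))⁻¹) * rexp (-x ^ 2 / (2 * A) + -(y - x) ^ 2 / (2 * B)) := by
          rw [Real.exp_add]; ring
      _ = ((√(2 * π * (A + B)))⁻¹ * (√(π / k))⁻¹) * rexp (-y ^ 2 / (2 * (A + B)) + -k * (x - m) ^ 2) := by
          rw [hconst, hexp]
      _ = _ := by rw [Real.exp_add]; ring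
  rw [integral_congr_ae (ae_of_all _ hpoint), integral_const_mul]
  rw [integral_const_mul]
  have hshift : ∫ x : ℝ, rexp (-k * (x - m) ^ 2) = ∫ x : ℝ, rexp (-k * x ^ 2) :=
    integral_sub_right_eq_self (fun x => rexp (-k * x ^ 2)) m
  rw [hshift, integral_gaussian, inv_mul_cancel₀ (by positivity), mul_one]

lemma gaussianReal_conv (a b : ℝ≥0) :
    Measure.map (fun p : ℝ × ℝ => p.1 + p.2) ((gaussianReal 0 a).prod (gaussianReal 0 b))
      = gaussianReal 0 (a + b) := by
  by_cases ha : a = 0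
  · subst ha
    rw [gaussianReal_zero_var, Measure.dirac_prod, Measure.map_map (by fun_prop) (by fun_prop)]
    simp [Function.comp_def]
  by_cases hb : b = 0
  · subst hb
    rw [gaussianReal_zero_var, Measure.prod_dirac, Measure.map_map (by fun_prop) (by fun_prop)]
    simp [Function.comp_def]
  -- main case
  have hmeas : Measurable (fun p : ℝ × ℝ => p.1 + p.2) := by fun_prop
  haveI : IsProbabilityMeasure (((gaussianReal 0 a).prod (gaussianReal 0 b)).map
      (fun p : ℝ × ℝ => p.1 + p.2)) := Measure.isProbabilityMeasure_map hmeas.aemeasurable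
  refine Measure.ext_of_Iic _ _ (fun t => ?_)
  rw [Measure.map_apply hmeas measurableSet_Iic]
  have hpre : (fun p : ℝ × ℝ => p.1 + p.2) ⁻¹' Iic t = {p : ℝ × ℝ | p.1 + p.2 ≤ t} := rfl
  rw [hpre, Measure.prod_apply (by exact measurableSet_le (by fun_prop) measurable_const)]
  have hslice : ∀ x : ℝ, (gaussianReal 0 b) (Prod.mk x ⁻¹' {p : ℝ × ℝ | p.1 + p.2 ≤ t})
      = ∫⁻ s in Iic t, gaussianPDF 0 b (s - x) := by
    intro x
    have h1 : (Prod.mk x ⁻¹' {p : ℝ × ℝ | p.1 + p.2 ≤ t}) = Iic (t - x) := by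
      ext y; simp [le_sub_iff_add_le, add_comm]
    rw [h1, gaussianReal_apply _ hb, ← lintegral_indicator measurableSet_Iic,
      ← lintegral_indicator measurableSet_Iic]
    have := lintegral_add_right_eq_self (μ := (volume : Measure ℝ))
      (fun s => (Iic (t - x)).indicator (gaussianPDF 0 b) s) (-x)
    rw [← this]
    refine lintegral_congr fun s => ?_
    by_cases hs : s ≤ t
    · have h2 : s + -x ∈ Iic (t - x) := by simp [le_sub_iff_add_le, add_comm, hs, add_neg_le_iff_le_add, sub_add_cancel]
      rw [Set.indicator_of_mem h2]
      simp [Set.indicator_apply, hs, sub_eq_add_neg]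
    · have h2 : s + -x ∉ Iic (t - x) := by simpa using hs
      rw [Set.indicator_of_notMem h2, Set.indicator_of_notMem (by simpa using hs)]
  rw [lintegral_congr hslice, gaussianReal_of_var_ne_zero _ ha,
    lintegral_withDensity_eq_lintegral_mul _ (measurable_gaussianPDF _ _)
      (Measurable.lintegral_prod_right' (f := fun p : ℝ × ℝ => gaussianPDF 0 b (p.2 - p.1))
        ((measurable_gaussianPDF 0 b).comp (measurable_snd.sub measurable_fst)))]
  have hswap : ∫⁻ x : ℝ, gaussianPDF 0 a x * ∫⁻ s in Iic t, gaussianPDF 0 b (s - x)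
      = ∫⁻ s in Iic t, ∫⁻ x : ℝ, gaussianPDF 0 a x * gaussianPDF 0 b (s - x) := by
    have h1 : ∀ x : ℝ, gaussianPDF 0 a x * ∫⁻ s in Iic t, gaussianPDF 0 b (s - x)
        = ∫⁻ s in Iic t, gaussianPDF 0 a x * gaussianPDF 0 b (s - x) :=
      fun x => (lintegral_const_mul _ ((measurable_gaussianPDF 0 b).comp (measurable_id.sub_const x))).symm
    rw [lintegral_congr h1]
    exact lintegral_lintegral_swap
      (((measurable_gaussianPDF 0 a).comp measurable_fst).mul
        ((measurable_gaussianPDF 0 b).comp (measurable_snd.sub measurable_fst))).aemeasurable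
  have hmul : ∀ x : ℝ, (gaussianPDF 0 a * fun x => ∫⁻ s in Iic t, gaussianPDF 0 b (s - x)) x
      = gaussianPDF 0 a x * ∫⁻ s in Iic t, gaussianPDF 0 b (s - x) := fun _ => rfl
  rw [lintegral_congr hmul, hswap]
  have hinner : ∀ s : ℝ, ∫⁻ x : ℝ, gaussianPDF 0 a x * gaussianPDF 0 b (s - x)
      = gaussianPDF 0 (a + b) s := by
    intro s
    have hip : ∀ x : ℝ, gaussianPDF 0 a x * gaussianPDF 0 b (s - x)
        = ENNReal.ofReal (gaussianPDFReal 0 a x * gaussianPDFReal 0 b (s - x)) := by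
      intro x
      rw [gaussianPDF, gaussianPDF, ← ENNReal.ofReal_mul (gaussianPDFReal_nonneg _ _ _)]
    rw [lintegral_congr hip, ← ofReal_integral_eq_lintegral_ofReal, gauss_conv_pdf ha hb s, gaussianPDF]
    · -- integrability
      have hbd : ∀ x : ℝ, ‖gaussianPDFReal 0 b (s - x)‖ ≤ (√(2 * π * (b:ℝ)))⁻¹ := by
        intro x
        rw [Real.norm_of_nonneg (gaussianPDFReal_nonneg _ _ _), gaussianPDFReal]
        refine mul_le_of_le_one_right (by positivity) ?_
        rw [Real.exp_le_one_iff]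
        have : (0:ℝ) < (b:ℝ) := lt_of_le_of_ne b.coe_nonneg (by exact_mod_cast (Ne.symm hb))
        apply div_nonpos_of_nonpos_of_nonneg
        · simpa using sq_nonneg (s - x - 0)
        · positivity
      have hmeas2 : AEStronglyMeasurable (fun x : ℝ => gaussianPDFReal 0 b (s - x)) volume :=
        ((measurable_gaussianPDFReal 0 b).comp (measurable_const.sub measurable_id)).aestronglyMeasurable
      have := (integrable_gaussianPDFReal 0 a).bdd_mul hmeas2 (ae_of_all _ hbd)
      simpa [mul_comm] using this
    · exact ae_of_all _ fun x => mul_nonneg (gaussianPDFReal_nonneg _ _ _) (gaussianPDFReal_nonneg _ _ _)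
  rw [lintegral_congr hinner, gaussianReal_apply _ (by simp [ha]) (Iic t)]

set_option maxHeartbeats 1000000 in
lemma map_linear_pi_gauss {n : ℕ} (V : ℝ≥0) (v : Fin n → ℝ) :
    Measure.map (fun z : Fin n → ℝ => ∑ i, v i * z i) (Measure.pi fun _ => gaussianReal 0 V)
      = gaussianReal 0 (Real.toNNReal (∑ i, v i ^ 2) * V) := by
  induction n with
  | zero =>
      rw [Measure.pi_of_empty]
      rw [Measure.map_dirac' (by fun_prop)]
      simp
  | succ n ih =>
      have hmp := MeasureTheory.measurePreserving_piFinSuccAbove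
        (fun _ : Fin (n+1) => gaussianReal 0 V) 0
      set e := MeasurableEquiv.piFinSuccAbove (fun _ : Fin (n+1) => ℝ) 0 with he
      have hsum : (fun z : Fin (n+1) → ℝ => ∑ i, v i * z i)
          = (fun p : ℝ × (Fin n → ℝ) => v 0 * p.1 + ∑ i : Fin n, v i.succ * p.2 i) ∘ e := by
        funext z
        simp only [Function.comp_apply, he]
        rw [Fin.sum_univ_succ]
        rfl
      have hG : (fun p : ℝ × (Fin n → ℝ) => v 0 * p.1 + ∑ i : Fin n, v i.succ * p.2 i)
          = (fun q : ℝ × ℝ => q.1 + q.2) ∘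
            (Prod.map (fun t => v 0 * t) (fun w : Fin n → ℝ => ∑ i : Fin n, v i.succ * w i)) := rfl
      rw [hsum, ← Measure.map_map (by fun_prop) e.measurable, hmp.map_eq, hG,
        ← Measure.map_map (by fun_prop) (by fun_prop),
        ← Measure.map_prod_map _ _ (by fun_prop) (by fun_prop)]
      rw [show (fun t : ℝ => v 0 * t) = (v 0 * ·) from rfl, gaussianReal_map_const_mul,
        ih (fun i : Fin n => v i.succ), mul_zero, gaussianReal_conv]
      congr 1
      rw [← NNReal.coe_inj]
      push_cast
      rw [Real.coe_toNNReal _ (Finset.sum_nonneg fun i _ => sq_nonneg _),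
        Real.coe_toNNReal _ (Finset.sum_nonneg fun i _ => sq_nonneg _), Fin.sum_univ_succ]
      ring

lemma ofReal_stdNormCDF (t : ℝ) : ENNReal.ofReal (stdNormCDF t) = gaussianReal 0 1 (Iic t) :=
  ENNReal.ofReal_toReal (measure_ne_top _ _)

lemma stdNormCDF_nonneg (t : ℝ) : 0 ≤ stdNormCDF t := ENNReal.toReal_nonneg

lemma stdNormCDF_le_one (t : ℝ) : stdNormCDF t ≤ 1 := by
  rw [stdNormCDF]
  have h := measure_mono (subset_univ (Iic t)) (μ := gaussianReal 0 1)
  rw [measure_univ] at h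
  simpa using ENNReal.toReal_mono (by simp) h

lemma gaussianReal_Ioc_pos {t t' : ℝ} (h : t < t') : 0 < gaussianReal 0 1 (Ioc t t') := by
  rw [gaussianReal_apply_eq_integral 0 one_ne_zero]
  rw [ENNReal.ofReal_pos]
  have hsup : (Ioc t t') ∩ Function.support (gaussianPDFReal 0 1) = Ioc t t' := by
    rw [inter_eq_self_of_subset_left]
    intro x _
    exact (gaussianPDFReal_pos 0 1 x one_ne_zero).ne'
  rw [setIntegral_pos_iff_support_of_nonneg_ae
    (ae_of_all _ (gaussianPDFReal_nonneg 0 1)) ((integrable_gaussianPDFReal 0 1).restrict)]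
  have hsup' : Function.support (gaussianPDFReal 0 1) = univ :=
    eq_univ_of_forall fun x => (gaussianPDFReal_pos 0 1 x one_ne_zero).ne'
  rw [hsup', univ_inter, Real.volume_Ioc]
  exact ENNReal.ofReal_pos.mpr (sub_pos.mpr h)

lemma stdNormCDF_strictMono : StrictMono stdNormCDF := by
  intro t t' h
  have hsplit : Iic t' = Iic t ∪ Ioc t t' := (Iic_union_Ioc_eq_Iic h.le).symm
  have hdisj : Disjoint (Iic t) (Ioc t t') := Iic_disjoint_Ioc le_rfl
  have := measure_union (μ := gaussianReal 0 1) hdisj measurableSet_Ioc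
  rw [stdNormCDF, stdNormCDF, hsplit, this]
  rw [ENNReal.toReal_add (measure_ne_top _ _) (measure_ne_top _ _)]
  have := gaussianReal_Ioc_pos h
  have h2 : 0 < (gaussianReal 0 1 (Ioc t t')).toReal :=
    ENNReal.toReal_pos this.ne' (measure_ne_top _ _)
  linarith

lemma stdNormCDF_primitive (t : ℝ) :
    stdNormCDF t = stdNormCDF 0 + ∫ x in (0:ℝ)..t, gaussianPDFReal 0 1 x := by
  have key : ∀ a b : ℝ, a ≤ b →
      stdNormCDF b = stdNormCDF a + ∫ x in Ioc a b, gaussianPDFReal 0 1 x := by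
    intro a b hab
    have hsplit : Iic b = Iic a ∪ Ioc a b := (Iic_union_Ioc_eq_Iic hab).symm
    have hdisj : Disjoint (Iic a) (Ioc a b) := Iic_disjoint_Ioc le_rfl
    rw [stdNormCDF, stdNormCDF, hsplit, measure_union hdisj measurableSet_Ioc,
      ENNReal.toReal_add (measure_ne_top _ _) (measure_ne_top _ _)]
    congr 1
    rw [gaussianReal_apply_eq_integral 0 one_ne_zero,
      ENNReal.toReal_ofReal (integral_nonneg (fun x => gaussianPDFReal_nonneg 0 1 x))]
  rcases le_total 0 t with ht | ht
  · rw [key 0 t ht, intervalIntegral.integral_of_le ht]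
  · rw [intervalIntegral.integral_of_ge ht, key t 0 ht]
    ring

lemma stdNormCDF_continuous : Continuous stdNormCDF := by
  have : stdNormCDF = fun t => stdNormCDF 0 + ∫ x in (0:ℝ)..t, gaussianPDFReal 0 1 x :=
    funext stdNormCDF_primitive
  rw [this]
  refine continuous_const.add ?_
  exact intervalIntegral.continuous_primitive
    (fun a b => (integrable_gaussianPDFReal 0 1).intervalIntegrable) 0

lemma stdNormCDF_exists_lt {p : ℝ} (hp : 0 < p) : ∃ t : ℝ, stdNormCDF t < p := by
  have hinter : ⋂ n : ℕ, Iic (-(n:ℝ)) = ∅ := by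
    ext x
    simp only [mem_iInter, mem_Iic, mem_empty_iff_false, iff_false, not_forall, not_le]
    obtain ⟨n, hn⟩ := exists_nat_gt (-x)
    exact ⟨n, by linarith⟩
  have htend := MeasureTheory.tendsto_measure_iInter_atTop (μ := gaussianReal 0 1)
    (fun n : ℕ => measurableSet_Iic.nullMeasurableSet)
    (fun i j hij => Iic_subset_Iic.mpr (by exact_mod_cast neg_le_neg (Nat.cast_le.mpr hij)))
    ⟨0, measure_ne_top _ _⟩
  rw [hinter, measure_empty] at htend
  have := htend.eventually (eventually_lt_nhds (by simpa using ENNReal.ofReal_pos.mpr hp :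
    (0:ℝ≥0∞) < ENNReal.ofReal p))
  obtain ⟨n, hn⟩ := this.exists
  refine ⟨-(n:ℝ), ?_⟩
  have := ENNReal.toReal_strict_mono (by simp) hn
  rwa [ENNReal.toReal_ofReal hp.le] at this

lemma stdNormCDF_exists_ge {p : ℝ} (hp : p < 1) : ∃ t : ℝ, p < stdNormCDF t := by
  have htend := MeasureTheory.tendsto_measure_Iic_atTop (μ := gaussianReal 0 1)
  rw [measure_univ] at htend
  have hlt : ENNReal.ofReal p < 1 := by
    rcases le_or_gt p 0 with h | h
    · simpa [ENNReal.ofReal_eq_zero.mpr h] using ENNReal.zero_lt_one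
    · rwa [← ENNReal.ofReal_one, ENNReal.ofReal_lt_ofReal_iff one_pos]
  have := htend.eventually (eventually_gt_nhds hlt)
  obtain ⟨t, ht⟩ := this.exists
  refine ⟨t, ?_⟩
  have h2 := ENNReal.toReal_strict_mono (measure_ne_top _ _) ht
  rcases le_or_gt p 0 with h | h
  · calc p ≤ 0 := h
      _ < _ := by
          have : (0:ℝ≥0∞) < gaussianReal 0 1 (Iic t) := lt_of_le_of_lt (by simp) ht
          exact ENNReal.toReal_pos this.ne' (measure_ne_top _ _)
  · rwa [ENNReal.toReal_ofReal h.le] at h2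

lemma stdNormCDF_probit {p : ℝ} (hp : p ∈ Set.Ioo (0:ℝ) 1) : stdNormCDF (probit p) = p := by
  obtain ⟨t1, ht1⟩ := stdNormCDF_exists_lt hp.1
  obtain ⟨t2, ht2⟩ := stdNormCDF_exists_ge hp.2
  have ht12 : t1 ≤ t2 := by
    by_contra hc
    exact absurd (stdNormCDF_strictMono (lt_of_not_ge hc)) (by linarith [ht1, ht2])
  obtain ⟨t0, -, ht0⟩ := intermediate_value_Icc ht12 stdNormCDF_continuous.continuousOn
    (⟨le_of_lt ht1, le_of_lt ht2⟩ : p ∈ Icc (stdNormCDF t1) (stdNormCDF t2))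
  have hset : {t : ℝ | p ≤ stdNormCDF t} = Ici t0 := by
    ext s
    simp only [mem_setOf_eq, mem_Ici]
    constructor
    · intro hs
      by_contra hc
      have := stdNormCDF_strictMono (lt_of_not_ge hc)
      rw [ht0] at this
      linarith
    · intro hs
      rw [← ht0]
      exact stdNormCDF_strictMono.monotone hs
  rw [probit, hset, csInf_Ici, ht0]

lemma le_probit {r q : ℝ} (hq : q ∈ Set.Ioo (0:ℝ) 1) (h : stdNormCDF r ≤ q) : r ≤ probit q := by
  have := stdNormCDF_probit hq
  rw [← this] at h
  exact (stdNormCDF_strictMono.le_iff_le).mp h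

lemma gauss_cdf (m : ℝ) (V : ℝ≥0) (hV : V ≠ 0) (t : ℝ) :
    gaussianReal m V (Iic t) = ENNReal.ofReal (stdNormCDF ((t - m) / Real.sqrt V)) := by
  have hs : (0:ℝ) < Real.sqrt V := Real.sqrt_pos.mpr (by exact_mod_cast pos_iff_ne_zero.mpr hV)
  have h1 : (gaussianReal 0 1).map ((Real.sqrt V : ℝ) * ·) = gaussianReal 0 V := by
    rw [gaussianReal_map_const_mul]
    congr 1
    · ring
    · rw [← NNReal.coe_inj]
      push_cast
      rw [Real.sq_sqrt V.coe_nonneg]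
      ring
  have h2 : (gaussianReal 0 V).map (· + m) = gaussianReal m V := by
    rw [gaussianReal_map_add_const]
    congr 1
    ring
  rw [← h2, ← h1, Measure.map_map (by fun_prop) (by fun_prop)]
  rw [Measure.map_apply (by fun_prop) measurableSet_Iic]
  have hpre : ((fun x => x + m) ∘ fun x => (Real.sqrt V : ℝ) * x) ⁻¹' Iic t
      = Iic ((t - m) / Real.sqrt V) := by
    ext x
    simp only [Function.comp_apply, mem_preimage, mem_Iic]
    rw [le_div_iff₀ hs, mul_comm]
    constructor <;> intro <;> linarith
  rw [hpre, ofReal_stdNormCDF]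

set_option maxHeartbeats 1000000 in
lemma withDensity_map_add {d : ℕ} (D : (Fin d → ℝ) → ℝ≥0∞) (hD : Measurable D) (x : Fin d → ℝ) :
    ((volume : Measure (Fin d → ℝ)).withDensity D).map (fun z => x + z)
      = volume.withDensity (fun z => D (z - x)) := by
  ext s hs
  have hpre : MeasurableSet ((fun z : Fin d → ℝ => x + z) ⁻¹' s) :=
    hs.preimage (by fun_prop)
  rw [Measure.map_apply (by fun_prop) hs, withDensity_apply _ hpre, withDensity_apply _ hs,
    ← lintegral_indicator hpre, ← lintegral_indicator hs,
    ← lintegral_add_right_eq_self (s.indicator fun w => D (w - x)) x]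
  refine lintegral_congr fun z => ?_
  by_cases hz : x + z ∈ s
  · have hz1 : z ∈ (fun z : Fin d → ℝ => x + z) ⁻¹' s := hz
    have hz2 : z + x ∈ s := by rwa [add_comm] at hz
    rw [Set.indicator_of_mem hz1, Set.indicator_of_mem hz2]
    simp
  · have hz1 : z ∉ (fun z : Fin d → ℝ => x + z) ⁻¹' s := hz
    have hz2 : z + x ∉ s := by rwa [add_comm] at hz
    rw [Set.indicator_of_notMem hz1, Set.indicator_of_notMem hz2]

theorem key_ineq {Y : Type*} [MeasurableSpace Y] [MeasurableSingletonClass Y]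
    (d : ℕ) (f : (Fin d → ℝ) → Y) (hf : Measurable f) (c : Y)
    (σ : ℝ) (hσ : 0 < σ)
    (h : (Fin d → ℝ) → ℝ)
    (hh : ∀ x, h x = ((gaussVec d σ) {δ | f (x + δ) = c}).toReal)
    (hrange : ∀ x, h x ∈ Set.Ioo (0:ℝ) 1) :
    ∀ x x' : Fin d → ℝ,
      probit (h x) - probit (h x') ≤ σ⁻¹ * Real.sqrt (∑ i, (x i - x' i) ^ 2) := by
  intro x x'
  set u : Fin d → ℝ := fun i => x' i - x i with hu
  have hsum_eq : ∑ i, (x i - x' i) ^ 2 = ∑ i, u i ^ 2 :=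
    Finset.sum_congr rfl fun i _ => by simp [hu]; ring
  set s : ℝ := Real.sqrt (∑ i, u i ^ 2) with hs_def
  rw [hsum_eq, ← hs_def]
  have hsum_nonneg : (0:ℝ) ≤ ∑ i, u i ^ 2 := Finset.sum_nonneg fun i _ => sq_nonneg _
  rcases eq_or_lt_of_le hsum_nonneg with hzero | hpos
  · -- x = x'
    have hxx : x = x' := by
      funext i
      have := (Finset.sum_eq_zero_iff_of_nonneg (fun i _ => sq_nonneg (u i))).mp hzero.symm i
        (Finset.mem_univ i)
      have := sq_eq_zero_iff.mp this
      simp only [hu] at this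
      linarith
    rw [hxx, sub_self]
    positivity
  have hs_pos : 0 < s := Real.sqrt_pos.mpr hpos
  have hs_sq : s ^ 2 = ∑ i, u i ^ 2 := Real.sq_sqrt hsum_nonneg
  -- variance
  set V : ℝ≥0 := Real.toNNReal (σ ^ 2) with hVdef
  have hVval : (V : ℝ) = σ ^ 2 := Real.coe_toNNReal _ (sq_nonneg σ)
  have hV : V ≠ 0 := by
    intro hc
    rw [hc] at hVval
    simp at hVval
    nlinarith
  -- measures
  set μ0 : Measure (Fin d → ℝ) := gaussVec d σ with hμ0def
  haveI : IsProbabilityMeasure μ0 := by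
    rw [hμ0def, gaussVec]
    infer_instance
  set A : Set (Fin d → ℝ) := f ⁻¹' {c} with hAdef
  have hA : MeasurableSet A := hf (measurableSet_singleton c)
  have hpre_eq : ∀ y : Fin d → ℝ, {δ | f (y + δ) = c} = (fun δ => y + δ) ⁻¹' A := by
    intro y; ext δ; simp [hAdef]
  have haddmeas : ∀ y : Fin d → ℝ, Measurable (fun δ : Fin d → ℝ => y + δ) := by
    intro y; fun_prop
  set μx : Measure (Fin d → ℝ) := μ0.map (fun δ => x + δ) with hμx
  set μx' : Measure (Fin d → ℝ) := μ0.map (fun δ => x' + δ) with hμx'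
  haveI : IsProbabilityMeasure μx := Measure.isProbabilityMeasure_map (haddmeas x).aemeasurable
  haveI : IsProbabilityMeasure μx' := Measure.isProbabilityMeasure_map (haddmeas x').aemeasurable
  have hμxA : μx A = ENNReal.ofReal (h x) := by
    rw [hμx, Measure.map_apply (haddmeas x) hA, ← hpre_eq, hh x, ENNReal.ofReal_toReal]
    exact measure_ne_top _ _
  have hμx'A : μx' A = ENNReal.ofReal (h x') := by
    rw [hμx', Measure.map_apply (haddmeas x') hA, ← hpre_eq, hh x', ENNReal.ofReal_toReal]
    exact measure_ne_top _ _
  -- densities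
  haveI hsfin : SigmaFinite ((volume : Measure ℝ).withDensity (gaussianPDF 0 V)) := by
    rw [← gaussianReal_of_var_ne_zero 0 hV]
    infer_instance
  have hμ0d : μ0 = (volume : Measure (Fin d → ℝ)).withDensity
      (fun z => ∏ i, gaussianPDF 0 V (z i)) := by
    rw [hμ0def, gaussVec, ← hVdef]
    calc Measure.pi (fun _ : Fin d => gaussianReal 0 V)
        = Measure.pi (fun _ : Fin d => volume.withDensity (gaussianPDF 0 V)) := by
          rw [gaussianReal_of_var_ne_zero 0 hV]
      _ = (Measure.pi fun _ : Fin d => (volume : Measure ℝ)).withDensity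
            (fun z => ∏ i, gaussianPDF 0 V (z i)) :=
          pi_withDensity_fin volume _ (measurable_gaussianPDF 0 V)
      _ = (volume : Measure (Fin d → ℝ)).withDensity
            (fun z => ∏ i, gaussianPDF 0 V (z i)) := by rw [← volume_pi]
  have hDmeas : ∀ y : Fin d → ℝ, Measurable (fun z : Fin d → ℝ => ∏ i, gaussianPDF 0 V (z i - y i)) :=
    fun y => Finset.measurable_prod _ fun i _ =>
      (measurable_gaussianPDF 0 V).comp (by fun_prop)
  have hdens : ∀ y : Fin d → ℝ, μ0.map (fun δ => y + δ)
      = volume.withDensity (fun z => ∏ i, gaussianPDF 0 V (z i - y i)) := by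
    intro y
    have hD0 : Measurable (fun z : Fin d → ℝ => ∏ i, gaussianPDF 0 V (z i)) :=
      Finset.measurable_prod _ fun i _ =>
        (measurable_gaussianPDF 0 V).comp (measurable_pi_apply i)
    rw [hμ0d, withDensity_map_add _ hD0 y]
    rfl
  -- linear functional
  set ℓ : (Fin d → ℝ) → ℝ := fun z => ∑ i, u i * z i with hℓdef
  have hℓmeas : Measurable ℓ :=
    Finset.measurable_sum _ fun i _ => (by fun_prop : Measurable fun z : Fin d → ℝ => u i * z i)
  set K : ℝ := ∑ i, u i * (x i + x' i) with hK
  have he : ∀ z : Fin d → ℝ, (∑ i, ((z i - x i) ^ 2 - (z i - x' i) ^ 2)) = 2 * ℓ z - K := by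
    intro z
    rw [hℓdef, hK, Finset.mul_sum, ← Finset.sum_sub_distrib]
    refine Finset.sum_congr rfl fun i _ => ?_
    simp only [hu]
    ring
  set ρ : (Fin d → ℝ) → ℝ≥0∞ :=
    fun z => ENNReal.ofReal (rexp ((2 * ℓ z - K) / (2 * σ ^ 2))) with hρ
  have hρmeas : Measurable ρ :=
    (Real.measurable_exp.comp (((hℓmeas.const_mul 2).sub_const K).div_const _)).ennreal_ofReal
  have hratio : ∀ z : Fin d → ℝ, (∏ i, gaussianPDF 0 V (z i - x' i))
      = (∏ i, gaussianPDF 0 V (z i - x i)) * ρ z := by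
    intro z
    have hcoord : ∀ i : Fin d, gaussianPDFReal 0 V (z i - x' i)
        = gaussianPDFReal 0 V (z i - x i) *
            rexp (((z i - x i) ^ 2 - (z i - x' i) ^ 2) / (2 * σ ^ 2)) := by
      intro i
      simp only [gaussianPDFReal, sub_zero]
      have hsplit : -(z i - x' i) ^ 2 / (2 * (V:ℝ))
          = -(z i - x i) ^ 2 / (2 * (V:ℝ))
            + ((z i - x i) ^ 2 - (z i - x' i) ^ 2) / (2 * σ ^ 2) := by
        rw [hVval]
        have hσ2 : σ ^ 2 ≠ 0 := by positivity
        field_simp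
        ring
      rw [hsplit, Real.exp_add]
      ring
    have hprodR : (∏ i, gaussianPDFReal 0 V (z i - x' i))
        = (∏ i, gaussianPDFReal 0 V (z i - x i)) * rexp ((2 * ℓ z - K) / (2 * σ ^ 2)) := by
      rw [Finset.prod_congr rfl (fun i _ => hcoord i), Finset.prod_mul_distrib, ← Real.exp_sum,
        ← Finset.sum_div, he z]
    have h1 : (∏ i, gaussianPDF 0 V (z i - x' i))
        = ENNReal.ofReal (∏ i, gaussianPDFReal 0 V (z i - x' i)) := by
      rw [ENNReal.ofReal_prod_of_nonneg (fun i _ => gaussianPDFReal_nonneg _ _ _)]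
      rfl
    have h2 : (∏ i, gaussianPDF 0 V (z i - x i))
        = ENNReal.ofReal (∏ i, gaussianPDFReal 0 V (z i - x i)) := by
      rw [ENNReal.ofReal_prod_of_nonneg (fun i _ => gaussianPDFReal_nonneg _ _ _)]
      rfl
    rw [h1, h2, hprodR, ENNReal.ofReal_mul
      (Finset.prod_nonneg fun i _ => gaussianPDFReal_nonneg _ _ _)]
  have hνd : μx' = μx.withDensity ρ := by
    rw [hμx', hμx, hdens x', hdens x]
    have hfeq : (fun z : Fin d → ℝ => ∏ i, gaussianPDF 0 V (z i - x' i))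
        = (fun z => ∏ i, gaussianPDF 0 V (z i - x i)) * ρ := funext hratio
    rw [hfeq, withDensity_mul _ (hDmeas x) hρmeas]
  -- law of ℓ
  have hlaw : ∀ y : Fin d → ℝ, (μ0.map (fun δ => y + δ)).map ℓ
      = gaussianReal (ℓ y) (Real.toNNReal (∑ i, u i ^ 2) * V) := by
    intro y
    rw [Measure.map_map hℓmeas (haddmeas y)]
    have hcomp : (ℓ ∘ fun δ => y + δ) = (· + ℓ y) ∘ ℓ := by
      funext δ
      simp only [Function.comp_apply, hℓdef]
      rw [← Finset.sum_add_distrib]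
      exact Finset.sum_congr rfl fun i _ => by simp only [Pi.add_apply]; ring
    rw [hcomp, ← Measure.map_map (by fun_prop) hℓmeas, hμ0def, gaussVec, ← hVdef,
      map_linear_pi_gauss V u, gaussianReal_map_add_const (ℓ y), zero_add]
  set W : ℝ≥0 := Real.toNNReal (∑ i, u i ^ 2) * V with hW
  have hWne : W ≠ 0 := by
    refine mul_ne_zero ?_ hV
    simp only [ne_eq, Real.toNNReal_eq_zero, not_le]
    exact hpos
  have hsqrtW : Real.sqrt W = s * σ := by
    rw [hW]
    push_cast
    rw [Real.coe_toNNReal _ hsum_nonneg, hVval,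
      show ((∑ i, u i ^ 2) * σ ^ 2 : ℝ) = (s * σ) ^ 2 by rw [← hs_sq]; ring]
    exact Real.sqrt_sq (by positivity)
  set p : ℝ := probit (h x) with hp
  set τ : ℝ := ℓ x + s * σ * p with hτ
  set B : Set (Fin d → ℝ) := ℓ ⁻¹' (Iic τ) with hBdef
  have hBmeas : MeasurableSet B := hℓmeas measurableSet_Iic
  have hμxB : μx B = ENNReal.ofReal (h x) := by
    have h1 : μx B = (μx.map ℓ) (Iic τ) := (Measure.map_apply hℓmeas measurableSet_Iic).symm
    rw [h1, hμx, hlaw x, gauss_cdf _ _ hWne]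
    rw [show Real.sqrt (Real.toNNReal (∑ i, u i ^ 2) * V : ℝ≥0) = s * σ from hsqrtW]
    have h2 : (τ - ℓ x) / (s * σ) = p := by
      rw [hτ]
      field_simp
      ring
    rw [h2, hp, stdNormCDF_probit (hrange x)]
  have hℓdiff : ℓ x' = ℓ x + s ^ 2 := by
    have : ℓ x' - ℓ x = s ^ 2 := by
      rw [hs_sq, hℓdef, ← Finset.sum_sub_distrib]
      exact Finset.sum_congr rfl fun i _ => by simp only [hu]; ring
    linarith
  have hμx'B : μx' B = ENNReal.ofReal (stdNormCDF (p - s / σ)) := by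
    have h1 : μx' B = (μx'.map ℓ) (Iic τ) := (Measure.map_apply hℓmeas measurableSet_Iic).symm
    rw [h1, hμx', hlaw x', gauss_cdf _ _ hWne]
    rw [show Real.sqrt (Real.toNNReal (∑ i, u i ^ 2) * V : ℝ≥0) = s * σ from hsqrtW]
    have h2 : (τ - ℓ x') / (s * σ) = p - s / σ := by
      rw [hτ, hℓdiff]
      field_simp
      ring
    rw [h2]
  -- Neyman-Pearson comparison
  set L : ℝ≥0∞ := ENNReal.ofReal (rexp ((2 * τ - K) / (2 * σ ^ 2))) with hL
  have hρ_le : ∀ z ∈ B, ρ z ≤ L := by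
    intro z hz
    rw [hρ, hL]
    refine ENNReal.ofReal_le_ofReal (Real.exp_le_exp.mpr ?_)
    have hzτ : ℓ z ≤ τ := hz
    have h2σ : (0:ℝ) < 2 * σ ^ 2 := by positivity
    rw [div_le_div_iff_of_pos_right h2σ]
    linarith
  have hρ_ge : ∀ z ∉ B, L ≤ ρ z := by
    intro z hz
    rw [hρ, hL]
    refine ENNReal.ofReal_le_ofReal (Real.exp_le_exp.mpr ?_)
    have hzτ : τ ≤ ℓ z := le_of_lt (lt_of_not_ge hz)
    have h2σ : (0:ℝ) < 2 * σ ^ 2 := by positivity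
    rw [div_le_div_iff_of_pos_right h2σ]
    linarith
  have hmmeq : μx (B \ A) = μx (A \ B) := by
    have h1 := measure_diff_add_inter (μ := μx) B hA
    have h2 := measure_diff_add_inter (μ := μx) A hBmeas
    rw [inter_comm A B] at h2
    rw [hμxB] at h1
    rw [hμxA] at h2
    have h3 : μx (B \ A) + μx (B ∩ A) = μx (A \ B) + μx (B ∩ A) := by rw [h1, h2]
    exact WithTop.add_right_cancel (measure_ne_top _ _) h3
  have hNP : μx' B ≤ μx' A := by
    rw [hνd, withDensity_apply _ hBmeas, withDensity_apply _ hA]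
    have hdisj1 : Disjoint (B ∩ A) (B \ A) :=
      Set.disjoint_sdiff_right.mono_left Set.inter_subset_right
    have hdisj2 : Disjoint (A ∩ B) (A \ B) :=
      Set.disjoint_sdiff_right.mono_left Set.inter_subset_right
    have hBsplit : ∫⁻ z in B, ρ z ∂μx
        = ∫⁻ z in B ∩ A, ρ z ∂μx + ∫⁻ z in B \ A, ρ z ∂μx := by
      rw [← lintegral_union (hBmeas.diff hA) hdisj1, Set.inter_union_diff]
    have hAsplit : ∫⁻ z in A, ρ z ∂μx
        = ∫⁻ z in A ∩ B, ρ z ∂μx + ∫⁻ z in A \ B, ρ z ∂μx := by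
      rw [← lintegral_union (hA.diff hBmeas) hdisj2, Set.inter_union_diff]
    calc ∫⁻ z in B, ρ z ∂μx
        = ∫⁻ z in B ∩ A, ρ z ∂μx + ∫⁻ z in B \ A, ρ z ∂μx := hBsplit
      _ ≤ ∫⁻ z in B ∩ A, ρ z ∂μx + L * μx (B \ A) := by
          refine add_le_add_right ?_ _
          calc ∫⁻ z in B \ A, ρ z ∂μx ≤ ∫⁻ _ in B \ A, L ∂μx :=
              setLIntegral_mono' (hBmeas.diff hA) (fun z hz => hρ_le z hz.1)
            _ = L * μx (B \ A) := setLIntegral_const _ _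
      _ = ∫⁻ z in A ∩ B, ρ z ∂μx + L * μx (A \ B) := by rw [inter_comm, hmmeq]
      _ ≤ ∫⁻ z in A ∩ B, ρ z ∂μx + ∫⁻ z in A \ B, ρ z ∂μx := by
          refine add_le_add_right ?_ _
          calc L * μx (A \ B) = ∫⁻ _ in A \ B, L ∂μx := (setLIntegral_const _ _).symm
            _ ≤ ∫⁻ z in A \ B, ρ z ∂μx :=
              setLIntegral_mono hρmeas (fun z hz => hρ_ge z hz.2)
      _ = ∫⁻ z in A, ρ z ∂μx := hAsplit.symm
  rw [hμx'B, hμx'A] at hNP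
  have hΦle : stdNormCDF (p - s / σ) ≤ h x' :=
    (ENNReal.ofReal_le_ofReal_iff (le_of_lt (hrange x').1)).mp hNP
  have hfin := le_probit (hrange x') hΦle
  have : s / σ = σ⁻¹ * s := by rw [div_eq_mul_inv, mul_comm]
  linarith [hfin]

end Aux

set_option maxHeartbeats 1000000 in
/-- Lipschitz bound for the Gaussian-smoothed class probability. For
`h(x) = P_{δ~N(0,σ²I)}[f(x+δ)=c]` with values in `(0,1)`, the map `x ↦ Φ⁻¹(h(x))` is
`1/σ`-Lipschitz with respect to the `ℓ₂` norm. -/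
theorem stmt_13 {Y : Type*} [MeasurableSpace Y] [MeasurableSingletonClass Y]
    (d : ℕ) (f : (Fin d → ℝ) → Y) (hf : Measurable f) (c : Y)
    (σ : ℝ) (hσ : 0 < σ)
    (h : (Fin d → ℝ) → ℝ)
    (hh : ∀ x, h x = ((gaussVec d σ) {δ | f (x + δ) = c}).toReal)
    (hrange : ∀ x, h x ∈ Set.Ioo (0:ℝ) 1) :
    ∀ x x' : Fin d → ℝ,
      |probit (h x) - probit (h x')| ≤ σ⁻¹ * Real.sqrt (∑ i, (x i - x' i) ^ 2) := by
  intro x x'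
  rw [abs_sub_le_iff]
  refine ⟨key_ineq d f hf c σ hσ h hh hrange x x', ?_⟩
  have hkey := key_ineq d f hf c σ hσ h hh hrange x' x
  have hsym : ∑ i, (x' i - x i) ^ 2 = ∑ i, (x i - x' i) ^ 2 :=
    Finset.sum_congr rfl fun i _ => by ring
  rwa [hsym] at hkey
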